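/- Let $\mathcal{G}$ be a finite group of $d\times d$ integer matrices containing an element $\bar{E}$ with $I_d-\bar{E}$ invertible, and let $\mathsf{M}$ be a $d\times d$ integer dilation matrix compatible with $\mathcal{G}$. Suppose the finitely supported filter $a$ is $\mathsf{M}$-interpolatory and has symmetry type $(\mathcal{G},c,\epsilon)$ with $(I_d-\bar{E})c \notin \mathsf{M}\mathbb{Z}^d$. Then $a$ has sum rules of order at most $1$ with respect to $\mathsf{M}$, i.e., $\mathrm{sr}(a,\mathsf{M}) \le 1$. -/

import Mathlib

open scoped BigOperators Classical
open Asymptotics Filter Matrix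

noncomputable section

/-- Real cast of an integer vector. -/
def zr {d : ℕ} (k : Fin d → ℤ) : Fin d → ℝ := fun i => (k i : ℝ)

/-- Fourier series `û(ξ) = ∑_k u(k) e^{-i k·ξ}` of a filter on `ℤ^d`. -/
def fhat {d : ℕ} (a : (Fin d → ℤ) → ℂ) (ξ : Fin d → ℝ) : ℂ :=
  ∑' k : Fin d → ℤ, a k * Complex.exp (-Complex.I * ((∑ i, (k i : ℝ) * ξ i : ℝ) : ℂ))

/-- `d_M = |det M|`. -/
def dm {d : ℕ} (M : Matrix (Fin d) (Fin d) ℤ) : ℕ := M.det.natAbs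

/-- A dilation matrix: integer matrix whose (complex) eigenvalues all exceed 1 in modulus. -/
def IsDilation {d : ℕ} (M : Matrix (Fin d) (Fin d) ℤ) : Prop :=
  M.det ≠ 0 ∧ ∀ z : ℂ, (M.map (Int.cast : ℤ → ℂ)).charpoly.IsRoot z → 1 < ‖z‖

/-- The real matrix associated with an integer matrix. -/
def Mr {d : ℕ} (M : Matrix (Fin d) (Fin d) ℤ) : Matrix (Fin d) (Fin d) ℝ :=
  M.map (Int.cast : ℤ → ℝ)

/-- `M`-interpolatory filter: `a(Mk) = d_M⁻¹ δ(k)`. -/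
def Interp {d : ℕ} (M : Matrix (Fin d) (Fin d) ℤ) (a : (Fin d → ℤ) → ℂ) : Prop :=
  ∀ k : Fin d → ℤ, a (M.mulVec k) = ((dm M : ℂ))⁻¹ * (if k = 0 then 1 else 0)

/-- Coset filter `u^{[γ,M]}(k) = u(γ + Mk)`. -/
def coset {d : ℕ} (M : Matrix (Fin d) (Fin d) ℤ) (γ : Fin d → ℤ)
    (a : (Fin d → ℤ) → ℂ) : (Fin d → ℤ) → ℂ := fun k => a (γ + M.mulVec k)

/-- `a` has order-`m` sum rules w.r.t. `M` (with `Ω` the set `Ω_M`):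
`â(ξ+2πω) = O(‖ξ‖^m)` as `ξ → 0` for every nonzero `ω ∈ Ω_M`. -/
def SumRules {d : ℕ} (M : Matrix (Fin d) (Fin d) ℤ) (Ω : Finset (Fin d → ℝ))
    (a : (Fin d → ℤ) → ℂ) (m : ℕ) : Prop :=
  ∀ ω ∈ Ω, ω ≠ 0 →
    (fun ξ : Fin d → ℝ => fhat a (ξ + (2 * Real.pi) • ω)) =O[nhds (0 : Fin d → ℝ)]
      fun ξ => ‖ξ‖ ^ m

/-- `Ω` is the set `Ω_M = [M^{-T}ℤ^d] ∩ [0,1)^d`. -/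
def OmegaSpec {d : ℕ} (M : Matrix (Fin d) (Fin d) ℤ) (Ω : Finset (Fin d → ℝ)) : Prop :=
  ∀ x : Fin d → ℝ, x ∈ Ω ↔
    ((∃ k : Fin d → ℤ, (Mr M)ᵀ.mulVec x = zr k) ∧ ∀ i, 0 ≤ x i ∧ x i < 1)

/-!
Write `k₀ = (I - Ē)c ∈ ℤ^d`. Conjugation by `M` permutes `G`, so `ĒM = ME` for some invertible
`E ∈ G`, and the symmetry `k ↦ Ē(k - c) + c` carries `Mℤ^d` onto `k₀ + Mℤ^d`: interpolation
forces `a(k₀ + Mm) = ε d_M⁻¹ δ(m)`. Second-order sum rules make the gradient of `â` vanish at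
`2πω` for every nonzero `ω ∈ Ω_M`; by orthogonality of the characters `k ↦ e^{2πi k·ω}`,
`ω ∈ Ω_M`, of `ℤ^d / Mℤ^d`, the first moments `∑_{k ∈ γ + Mℤ^d} a(k) k` then agree for all `γ`.
The coset of `k₀` gives `a(k₀) k₀` with `a(k₀) ≠ 0`, the coset `Mℤ^d` gives `0`, so `k₀ = 0`,
contradicting `k₀ ∉ Mℤ^d`.
-/

open Complex
open scoped Real

section Lattice

variable {d : ℕ}

@[simp] lemma zr_apply (k : Fin d → ℤ) (i : Fin d) : zr k i = k i := rfl

lemma zr_injective : Function.Injective (zr : (Fin d → ℤ) → Fin d → ℝ) :=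
  fun _ _ h => funext fun i => Int.cast_injective (α := ℝ) (congrFun h i)

@[simp] lemma zr_zero : zr (0 : Fin d → ℤ) = 0 := by ext; simp

@[simp] lemma zr_add (k l : Fin d → ℤ) : zr (k + l) = zr k + zr l := by ext; simp

@[simp] lemma zr_neg (k : Fin d → ℤ) : zr (-k) = -zr k := by ext; simp

lemma Mr_mulVec_zr (M : Matrix (Fin d) (Fin d) ℤ) (v : Fin d → ℤ) :
    Mr M *ᵥ zr v = zr (M *ᵥ v) := by
  ext i; simp [Mr, mulVec, dotProduct]

lemma zr_dotProduct_zr (k n : Fin d → ℤ) : zr k ⬝ᵥ zr n = ((k ⬝ᵥ n : ℤ) : ℝ) := by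
  simp [dotProduct]

lemma det_Mr (M : Matrix (Fin d) (Fin d) ℤ) : (Mr M).det = M.det :=
  ((Int.castRingHom ℝ).map_det M).symm

/-- The dual lattice `M^{-T} ℤ^d`. -/
def dualLattice (M : Matrix (Fin d) (Fin d) ℤ) : AddSubgroup (Fin d → ℝ) where
  carrier := {x | ∃ n, (Mr M)ᵀ *ᵥ x = zr n}
  zero_mem' := ⟨0, by simp⟩
  add_mem' := by
    rintro x y ⟨n, hn⟩ ⟨m, hm⟩
    exact ⟨n + m, by rw [mulVec_add, hn, hm, zr_add]⟩
  neg_mem' := by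
    rintro x ⟨n, hn⟩
    exact ⟨-n, by rw [mulVec_neg, hn, zr_neg]⟩

lemma zr_mem_dualLattice (M : Matrix (Fin d) (Fin d) ℤ) (n : Fin d → ℤ) :
    zr n ∈ dualLattice M :=
  ⟨Mᵀ *ᵥ n, by rw [← Mr_mulVec_zr]; simp [Mr, transpose_map]⟩

lemma OmegaSpec.mem_iff {M : Matrix (Fin d) (Fin d) ℤ} {Ω : Finset (Fin d → ℝ)}
    (hΩ : OmegaSpec M Ω) {x : Fin d → ℝ} :
    x ∈ Ω ↔ x ∈ dualLattice M ∧ ∀ i, 0 ≤ x i ∧ x i < 1 :=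
  hΩ x

lemma OmegaSpec.zero_mem {M : Matrix (Fin d) (Fin d) ℤ} {Ω : Finset (Fin d → ℝ)}
    (hΩ : OmegaSpec M Ω) : (0 : Fin d → ℝ) ∈ Ω :=
  hΩ.mem_iff.2 ⟨(dualLattice M).zero_mem, fun _ => ⟨le_rfl, zero_lt_one⟩⟩

def fractVec (x : Fin d → ℝ) : Fin d → ℝ := fun i => Int.fract (x i)

lemma fractVec_eq_sub (x : Fin d → ℝ) : fractVec x = x - zr fun i => ⌊x i⌋ := rfl

lemma fractVec_sub_zr (x : Fin d → ℝ) (n : Fin d → ℤ) : fractVec (x - zr n) = fractVec x := by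
  ext i; simp [fractVec]

lemma fractVec_eq_self {x : Fin d → ℝ} (hx : ∀ i, 0 ≤ x i ∧ x i < 1) : fractVec x = x :=
  funext fun i => Int.fract_eq_self.2 (hx i)

lemma fractVec_mem_Omega {M : Matrix (Fin d) (Fin d) ℤ} {Ω : Finset (Fin d → ℝ)}
    (hΩ : OmegaSpec M Ω) {x : Fin d → ℝ} (hx : x ∈ dualLattice M) : fractVec x ∈ Ω := by
  refine hΩ.mem_iff.2 ⟨?_, fun i => ⟨Int.fract_nonneg _, Int.fract_lt_one _⟩⟩
  rw [fractVec_eq_sub]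
  exact sub_mem hx (zr_mem_dualLattice M _)

/-- `Ω` represents `dualLattice M / ℤ^d`, so `ω ↦ fractVec (ω + ω₀)` permutes it. -/
lemma OmegaSpec.sum_comp_add {β : Type*} [AddCommMonoid β] {M : Matrix (Fin d) (Fin d) ℤ}
    {Ω : Finset (Fin d → ℝ)} (hΩ : OmegaSpec M Ω) {ω₀ : Fin d → ℝ} (hω₀ : ω₀ ∈ dualLattice M)
    {f : (Fin d → ℝ) → β} (hf : ∀ x n, f (x - zr n) = f x) :
    ∑ ω ∈ Ω, f (ω + ω₀) = ∑ ω ∈ Ω, f ω := by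
  have hback : ∀ ω ∈ Ω, ∀ v, fractVec (fractVec (ω + v) - v) = ω := fun ω hω v => by
    rw [fractVec_eq_sub (ω + v), add_sub_right_comm, add_sub_cancel_right, fractVec_sub_zr,
      fractVec_eq_self (hΩ.mem_iff.1 hω).2]
  refine Finset.sum_nbij' (fun ω => fractVec (ω + ω₀)) (fun ω => fractVec (ω - ω₀))
    (fun ω hω => fractVec_mem_Omega hΩ (add_mem (hΩ.mem_iff.1 hω).1 hω₀))
    (fun ω hω => fractVec_mem_Omega hΩ (sub_mem (hΩ.mem_iff.1 hω).1 hω₀))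
    (fun ω hω => hback ω hω ω₀) (fun ω hω => by simpa [sub_eq_add_neg] using hback ω hω (-ω₀))
    (fun ω _ => by rw [fractVec_eq_sub, hf])

end Lattice

section Characters

variable {d : ℕ}

def torusChar (k : Fin d → ℤ) (x : Fin d → ℝ) : ℂ := exp (2 * π * I * (zr k ⬝ᵥ x : ℝ))

lemma torusChar_add_left (k l : Fin d → ℤ) (x : Fin d → ℝ) :
    torusChar (k + l) x = torusChar k x * torusChar l x := by
  simp only [torusChar, zr_add, add_dotProduct, ofReal_add, mul_add, exp_add]

lemma torusChar_add_right (k : Fin d → ℤ) (x y : Fin d → ℝ) :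
    torusChar k (x + y) = torusChar k x * torusChar k y := by
  simp only [torusChar, dotProduct_add, ofReal_add, mul_add, exp_add]

lemma torusChar_eq_one_iff {k : Fin d → ℤ} {x : Fin d → ℝ} :
    torusChar k x = 1 ↔ ∃ n : ℤ, zr k ⬝ᵥ x = n := by
  have h2πI : (2 * π * I : ℂ) ≠ 0 := by simp [Real.pi_ne_zero]
  rw [torusChar, Complex.exp_eq_one_iff]
  refine exists_congr fun n => ?_
  rw [mul_comm (n : ℂ), mul_right_inj' h2πI]
  norm_cast

lemma torusChar_zero_right (k : Fin d → ℤ) : torusChar k 0 = 1 := by simp [torusChar]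

lemma torusChar_sub_zr (k : Fin d → ℤ) (x : Fin d → ℝ) (n : Fin d → ℤ) :
    torusChar k (x - zr n) = torusChar k x := by
  rw [sub_eq_add_neg, torusChar_add_right, ← zr_neg,
    torusChar_eq_one_iff.2 ⟨_, zr_dotProduct_zr _ _⟩, mul_one]

lemma torusChar_mulVec_eq_one {M : Matrix (Fin d) (Fin d) ℤ} {x : Fin d → ℝ}
    (hx : x ∈ dualLattice M) (m : Fin d → ℤ) : torusChar (M *ᵥ m) x = 1 := by
  obtain ⟨n, hn⟩ := hx
  refine torusChar_eq_one_iff.2 ⟨m ⬝ᵥ n, ?_⟩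
  rw [← Mr_mulVec_zr, ← vecMul_transpose, ← dotProduct_mulVec, hn, zr_dotProduct_zr]

lemma exists_torusChar_ne_one {M : Matrix (Fin d) (Fin d) ℤ} (hM : M.det ≠ 0) {k : Fin d → ℤ}
    (hk : k ∉ LinearMap.range M.mulVecLin) : ∃ ω₀ ∈ dualLattice M, torusChar k ω₀ ≠ 1 := by
  have hA : IsUnit (Mr M).det := by rw [det_Mr]; exact isUnit_iff_ne_zero.2 (by exact_mod_cast hM)
  obtain ⟨j, hj⟩ : ∃ j, ∀ n : ℤ, ((Mr M)⁻¹ *ᵥ zr k) j ≠ n := by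
    by_contra! h
    choose m hm using h
    refine hk ⟨m, zr_injective ?_⟩
    have hm' : zr m = (Mr M)⁻¹ *ᵥ zr k := funext fun j => (hm j).symm
    rw [mulVecLin_apply, ← Mr_mulVec_zr, hm', mulVec_mulVec, mul_nonsing_inv _ hA, one_mulVec]
  refine ⟨(Mr M)⁻¹ᵀ *ᵥ Pi.single j 1, ⟨Pi.single j 1, ?_⟩, ?_⟩
  · rw [mulVec_mulVec, ← transpose_mul, nonsing_inv_mul _ hA, transpose_one, one_mulVec]
    ext i; simp [Pi.single_apply]
  · rw [Ne, torusChar_eq_one_iff]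
    rintro ⟨n, hn⟩
    apply hj n
    rw [← hn, dotProduct_mulVec, vecMul_transpose, dotProduct_single, mul_one]

lemma OmegaSpec.sum_torusChar {M : Matrix (Fin d) (Fin d) ℤ} (hM : M.det ≠ 0)
    {Ω : Finset (Fin d → ℝ)} (hΩ : OmegaSpec M Ω) (k : Fin d → ℤ) :
    ∑ ω ∈ Ω, torusChar k ω = if k ∈ LinearMap.range M.mulVecLin then (Ω.card : ℂ) else 0 := by
  split_ifs with hk
  · obtain ⟨m, rfl⟩ := hk
    rw [mulVecLin_apply,
      Finset.sum_congr rfl fun ω hω => torusChar_mulVec_eq_one (hΩ.mem_iff.1 hω).1 m]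
    simp
  · obtain ⟨ω₀, hω₀, hne⟩ := exists_torusChar_ne_one hM hk
    have hinv := hΩ.sum_comp_add hω₀ (torusChar_sub_zr k)
    simp_rw [torusChar_add_right, ← Finset.sum_mul] at hinv
    have : (∑ ω ∈ Ω, torusChar k ω) * (torusChar k ω₀ - 1) = 0 := by
      rw [mul_sub, mul_one, hinv, sub_self]
    exact (mul_eq_zero.1 this).resolve_right (sub_ne_zero.2 hne)

end Characters

section CosetSums

variable {d : ℕ} {M : Matrix (Fin d) (Fin d) ℤ} {Ω : Finset (Fin d → ℝ)}

lemma OmegaSpec.sum_torusChar_mul_sum (hM : M.det ≠ 0) (hΩ : OmegaSpec M Ω)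
    (A : Finset (Fin d → ℤ)) (b : (Fin d → ℤ) → ℂ) (γ : Fin d → ℤ) :
    ∑ ω ∈ Ω, torusChar γ ω * ∑ k ∈ A, b k * torusChar (-k) ω =
      Ω.card * ∑ k ∈ A with k - γ ∈ LinearMap.range M.mulVecLin, b k := by
  simp_rw [Finset.mul_sum]
  rw [Finset.sum_comm, Finset.sum_filter]
  refine Finset.sum_congr rfl fun k _ => ?_
  simp_rw [mul_left_comm (torusChar γ _), ← torusChar_add_left, ← Finset.mul_sum,
    hΩ.sum_torusChar hM, ← sub_eq_add_neg, sub_mem_comm_iff]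
  split_ifs <;> ring

lemma OmegaSpec.card_mul_sum_coset_eq_sum (hM : M.det ≠ 0) (hΩ : OmegaSpec M Ω)
    {A : Finset (Fin d → ℤ)} {b : (Fin d → ℤ) → ℂ}
    (hb : ∀ ω ∈ Ω, ω ≠ 0 → ∑ k ∈ A, b k * torusChar (-k) ω = 0) (γ : Fin d → ℤ) :
    Ω.card * ∑ k ∈ A with k - γ ∈ LinearMap.range M.mulVecLin, b k = ∑ k ∈ A, b k := by
  rw [← hΩ.sum_torusChar_mul_sum hM, Finset.sum_eq_single_of_mem 0 hΩ.zero_mem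
    fun ω hω hω0 => by rw [hb ω hω hω0, mul_zero]]
  simp [torusChar_zero_right]

lemma sum_coset_mul_eq_single {A : Finset (Fin d → ℤ)} {a : (Fin d → ℤ) → ℂ}
    (hA : Function.support a ⊆ A) {γ : Fin d → ℤ} (hγ : ∀ m ≠ 0, coset M γ a m = 0)
    (f : (Fin d → ℤ) → ℂ) :
    ∑ k ∈ A with k - γ ∈ LinearMap.range M.mulVecLin, a k * f k = a γ * f γ := by
  rw [Finset.sum_filter, Finset.sum_eq_single γ]
  · simp
  · rintro k - hkγ
    split_ifs with hk
    · obtain ⟨m, hm⟩ := hk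
      have hm0 : m ≠ 0 := by rintro rfl; exact hkγ (by simpa [sub_eq_zero] using hm.symm)
      have := hγ m hm0
      rw [coset, ← mulVecLin_apply, hm, add_sub_cancel] at this
      rw [this, zero_mul]
    · rfl
  · intro hγA
    rw [Function.notMem_support.1 fun h => hγA (hA h)]
    simp

end CosetSums

section FourierSeries

variable {d : ℕ}

lemma fhat_eq_sum {a : (Fin d → ℤ) → ℂ} {A : Finset (Fin d → ℤ)}
    (hA : Function.support a ⊆ A) (ξ : Fin d → ℝ) :
    fhat a ξ = ∑ k ∈ A, a k * exp (-I * (zr k ⬝ᵥ ξ : ℝ)) :=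
  tsum_eq_sum fun k hk => by rw [Function.notMem_support.1 fun h => hk (hA h), zero_mul]

lemma hasDerivAt_fhat_line {a : (Fin d → ℤ) → ℂ} {A : Finset (Fin d → ℤ)}
    (hA : Function.support a ⊆ A) (ξ v : Fin d → ℝ) :
    HasDerivAt (fun t : ℝ => fhat a (t • v + ξ))
      (∑ k ∈ A, a k * exp (-I * (zr k ⬝ᵥ ξ : ℝ)) * (-I * (zr k ⬝ᵥ v : ℝ))) 0 := by
  simp_rw [fhat_eq_sum hA]
  refine HasDerivAt.fun_sum fun k _ => ?_
  have hphase : HasDerivAt (fun t : ℝ => -I * (zr k ⬝ᵥ (t • v + ξ) : ℝ))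
      (-I * (zr k ⬝ᵥ v : ℝ)) 0 := by
    simp_rw [dotProduct_add, dotProduct_smul, smul_eq_mul, ofReal_add, ofReal_mul]
    simpa using ((((hasDerivAt_id (0 : ℝ)).ofReal_comp).mul_const
      ((zr k ⬝ᵥ v : ℝ) : ℂ)).add_const ((zr k ⬝ᵥ ξ : ℝ) : ℂ)).const_mul (-I)
  simpa [mul_assoc] using hphase.cexp.const_mul (a k)

lemma HasDerivAt.eq_zero_of_isBigO_sq {𝕜 F : Type*} [NontriviallyNormedField 𝕜]
    [NormedAddCommGroup F] [NormedSpace 𝕜 F] {f : 𝕜 → F} {f' : F} (hf : HasDerivAt f f' 0)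
    (hO : f =O[nhds 0] fun t => t ^ 2) : f' = 0 := by
  have hf0 : f 0 = 0 := hO.eq_zero_imp.self_of_nhds (by simp)
  refine hf.unique (hasDerivAt_iff_isLittleO_nhds_zero.2 ?_)
  simpa [hf0] using hO.trans_isLittleO (isLittleO_pow_id one_lt_two)

lemma Asymptotics.IsBigO.comp_smul_of_norm_pow {E F : Type*} [NormedAddCommGroup E]
    [NormedSpace ℝ E] [Norm F] {g : E → F} {m : ℕ} (h : g =O[nhds 0] fun ξ => ‖ξ‖ ^ m)
    (v : E) : (fun t : ℝ => g (t • v)) =O[nhds 0] fun t => t ^ m := by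
  have hline : Tendsto (fun t : ℝ => t • v) (nhds 0) (nhds 0) := by
    simpa using (tendsto_id (x := nhds (0 : ℝ))).smul_const v
  refine (h.comp_tendsto hline).trans (IsBigO.of_bound (‖v‖ ^ m) (Eventually.of_forall
    fun t => ?_))
  simp [norm_smul, mul_pow, mul_comm]

lemma cexp_neg_I_dotProduct_two_pi_smul (k : Fin d → ℤ) (ω : Fin d → ℝ) :
    exp (-I * (zr k ⬝ᵥ (2 * π) • ω : ℝ)) = torusChar (-k) ω := by
  rw [torusChar, zr_neg, neg_dotProduct, dotProduct_smul, smul_eq_mul]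
  congr 1
  push_cast
  ring

/-- The sum is `i ∂ⱼâ(2πω)`. -/
lemma SumRules.sum_mul_torusChar_eq_zero {M : Matrix (Fin d) (Fin d) ℤ}
    {Ω : Finset (Fin d → ℝ)} {a : (Fin d → ℤ) → ℂ} (ha : (Function.support a).Finite)
    (h : SumRules M Ω a 2) {ω : Fin d → ℝ} (hω : ω ∈ Ω) (hω0 : ω ≠ 0) (j : Fin d) :
    ∑ k ∈ ha.toFinset, a k * k j * torusChar (-k) ω = 0 := by
  have hderiv := (hasDerivAt_fhat_line ha.coe_toFinset.symm.subset ((2 * π) • ω)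
    (Pi.single j 1)).eq_zero_of_isBigO_sq ((h ω hω hω0).comp_smul_of_norm_pow (Pi.single j 1))
  simp_rw [cexp_neg_I_dotProduct_two_pi_smul, dotProduct_single, mul_one, zr_apply,
    ofReal_intCast] at hderiv
  have : -I * ∑ k ∈ ha.toFinset, a k * k j * torusChar (-k) ω = 0 := by
    rw [← hderiv, Finset.mul_sum]
    exact Finset.sum_congr rfl fun k _ => by ring
  simpa [I_ne_zero] using this

end FourierSeries

section Symmetry

variable {d : ℕ} {M : Matrix (Fin d) (Fin d) ℤ} {G : Finset (Matrix (Fin d) (Fin d) ℤ)}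

/-- Conjugation by `M` is injective on the finite set `G`, hence onto. -/
lemma exists_mul_eq_mul_of_compat (hM : M.det ≠ 0) (hcompat : ∀ E ∈ G, ∃ E' ∈ G, M * E = E' * M)
    {E' : Matrix (Fin d) (Fin d) ℤ} (hE' : E' ∈ G) : ∃ E ∈ G, M * E = E' * M := by
  choose! f hfG hf using hcompat
  have hinj : Set.InjOn f G := fun E₁ h₁ E₂ h₂ h =>
    (isRegular_of_isLeftRegular_det (IsRegular.of_ne_zero hM).left).left
      (by rw [hf E₁ h₁, hf E₂ h₂, h] : M * E₁ = M * E₂)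
  obtain ⟨E, hE, rfl⟩ := Finset.surjOn_of_injOn_of_card_le f hfG hinj le_rfl hE'
  exact ⟨E, hE, hf E hE⟩

/-- The symmetry `k ↦ Ē(k - c) + c` maps `Mℤ^d` onto `k₀ + Mℤ^d`, since `ĒM = ME` with `E`
invertible. -/
lemma coset_eq_smul_coset_zero (hM : M.det ≠ 0) (hGinv : ∀ E ∈ G, ∃ F ∈ G, E * F = 1)
    (hcompat : ∀ E ∈ G, ∃ E' ∈ G, M * E = E' * M) {Ebar : Matrix (Fin d) (Fin d) ℤ}
    (hEbar : Ebar ∈ G) {a : (Fin d → ℤ) → ℂ} (hint : Interp M a) {c : Fin d → ℝ} {ε : ℂ}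
    (hsym : ∀ k j : Fin d → ℤ, zr j = (Mr Ebar) *ᵥ (zr k - c) + c → a j = ε * a k)
    {k₀ : Fin d → ℤ} (hk₀ : c - (Mr Ebar) *ᵥ c = zr k₀) :
    coset M k₀ a = ε • coset M 0 a := by
  obtain ⟨E, hE, hME⟩ := exists_mul_eq_mul_of_compat hM hcompat hEbar
  obtain ⟨F, -, hEF⟩ := hGinv E hE
  ext m
  simp only [coset, zero_add, Pi.smul_apply, smul_eq_mul]
  have hF0 : F *ᵥ m = 0 ↔ m = 0 := by
    refine ⟨fun h => ?_, fun h => by rw [h, mulVec_zero]⟩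
    rw [← one_mulVec m, ← hEF, ← mulVec_mulVec, h, mulVec_zero]
  have hEbarM : Ebar *ᵥ (M *ᵥ (F *ᵥ m)) = M *ᵥ m := by
    rw [mulVec_mulVec, mulVec_mulVec, ← hME, Matrix.mul_assoc, hEF, Matrix.mul_one]
  have hj : zr (k₀ + M *ᵥ m) = Mr Ebar *ᵥ (zr (M *ᵥ (F *ᵥ m)) - c) + c := by
    rw [mulVec_sub, Mr_mulVec_zr, hEbarM, zr_add, ← hk₀]
    abel
  rw [hsym _ _ hj, hint, hint]
  simp only [hF0]

end Symmetry

theorem stmt9_general {d : ℕ} (M : Matrix (Fin d) (Fin d) ℤ) (hM : IsDilation M)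
    (Ω : Finset (Fin d → ℝ)) (hΩ : OmegaSpec M Ω)
    (G : Finset (Matrix (Fin d) (Fin d) ℤ))
    (hGinv : ∀ E ∈ G, ∃ F ∈ G, E * F = 1)
    (Ebar : Matrix (Fin d) (Fin d) ℤ) (hEbar : Ebar ∈ G)
    (hcompat : ∀ E ∈ G, ∃ E' ∈ G, M * E = E' * M)
    (a : (Fin d → ℤ) → ℂ) (ha : (Function.support a).Finite) (hint : Interp M a)
    (c : Fin d → ℝ) (ε : ℂ) (hε : ε = 1 ∨ ε = -1)
    (hcint : ∀ E ∈ G, ∃ n : Fin d → ℤ, c - (Mr E).mulVec c = zr n)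
    (hsym : ∀ E ∈ G, ∀ k j : Fin d → ℤ,
      zr j = (Mr E).mulVec (zr k - c) + c → a j = ε * a k)
    (hc : ¬ ∃ n : Fin d → ℤ, c - (Mr Ebar).mulVec c = zr (M.mulVec n)) :
    ¬ SumRules M Ω a 2 := by
  intro hSR
  obtain ⟨k₀, hk₀⟩ := hcint Ebar hEbar
  have hcoset := coset_eq_smul_coset_zero hM.1 hGinv hcompat hEbar hint (hsym Ebar hEbar) hk₀
  have hcoset₀ : ∀ m ≠ 0, coset M 0 a m = 0 := fun m hm => by simp [coset, hint m, hm]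
  have hcosetk₀ : ∀ m ≠ 0, coset M k₀ a m = 0 := fun m hm => by
    rw [hcoset, Pi.smul_apply, hcoset₀ m hm, smul_zero]
  have hak₀ : a k₀ ≠ 0 := by
    have h := congrFun hcoset 0
    have h0 := hint 0
    simp only [coset, mulVec_zero, add_zero, Pi.smul_apply, smul_eq_mul] at h h0
    rw [h, h0]
    rcases hε with rfl | rfl <;> simpa [dm] using hM.1
  have hcard : (Ω.card : ℂ) ≠ 0 := Nat.cast_ne_zero.2 (Finset.card_ne_zero_of_mem hΩ.zero_mem)
  suffices k₀ = 0 from hc ⟨0, by rw [hk₀, this, mulVec_zero]⟩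
  ext j
  have hmoment := hΩ.card_mul_sum_coset_eq_sum hM.1
    fun ω hω hω0 => hSR.sum_mul_torusChar_eq_zero ha hω hω0 j
  have h := (hmoment k₀).trans (hmoment 0).symm
  rw [sum_coset_mul_eq_single ha.coe_toFinset.symm.subset hcosetk₀,
    sum_coset_mul_eq_single ha.coe_toFinset.symm.subset hcoset₀] at h
  simpa [hcard, hak₀] using h

/-- if an `M`-interpolatory filter has symmetry type `(𝒢, c, ε)` and
`(I - Ē)c ∉ Mℤ^d` for some `Ē ∈ 𝒢` with `I - Ē` invertible, then `sr(a, M) ≤ 1`,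
i.e. `a` does not have order-`2` sum rules. -/
theorem stmt9 {d : ℕ} (M : Matrix (Fin d) (Fin d) ℤ) (hM : IsDilation M)
    (Ω : Finset (Fin d → ℝ)) (hΩ : OmegaSpec M Ω)
    (G : Finset (Matrix (Fin d) (Fin d) ℤ))
    (hG1 : (1 : Matrix (Fin d) (Fin d) ℤ) ∈ G)
    (hGmul : ∀ E ∈ G, ∀ F ∈ G, E * F ∈ G)
    (hGinv : ∀ E ∈ G, ∃ F ∈ G, E * F = 1)
    (Ebar : Matrix (Fin d) (Fin d) ℤ) (hEbar : Ebar ∈ G)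
    (hEinv : ((1 : Matrix (Fin d) (Fin d) ℤ) - Ebar).det ≠ 0)
    (hcompat : ∀ E ∈ G, ∃ E' ∈ G, M * E = E' * M)
    (a : (Fin d → ℤ) → ℂ) (ha : (Function.support a).Finite) (hint : Interp M a)
    (c : Fin d → ℝ) (ε : ℂ) (hε : ε = 1 ∨ ε = -1)
    (hcint : ∀ E ∈ G, ∃ n : Fin d → ℤ, c - (Mr E).mulVec c = zr n)
    (hsym : ∀ E ∈ G, ∀ k j : Fin d → ℤ,
      zr j = (Mr E).mulVec (zr k - c) + c → a j = ε * a k)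
    (hc : ¬ ∃ n : Fin d → ℤ, c - (Mr Ebar).mulVec c = zr (M.mulVec n)) :
    ¬ SumRules M Ω a 2 :=
  stmt9_general M hM Ω hΩ G hGinv Ebar hEbar hcompat a ha hint c ε hε hcint hsym hc
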